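/- arXiv:2602.20952 — 2 statements merged into one kernel-verified Lean document; each statement's English description precedes it below -/
import Mathlib

section
/- Let a, b, w be real numbers with a ≤ b and w > 0, and let c be an integer such that a ≤ c·w and (c+1)·w ≤ b (i.e., the grid cell with index c is entirely contained in the interval [a, b]). Then there exists a natural number k such that a + k·w ≤ b and ⌊(a + k·w)/w⌋ = c. In other words, sampling the points a, a + w, a + 2w, … up to b touches every grid cell wholly contained in [a, b]. -/
/-- Let `a ≤ b`, `w > 0`, and let `c : ℤ` be such that `a ≤ c·w` and
`(c+1)·w ≤ b` (the grid cell with index `c` is entirely contained in `[a, b]`).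
Then some sample point `a + k·w` (`k : ℕ`) with `a + k·w ≤ b` lands in cell `c`,
i.e. `⌊(a + k·w)/w⌋ = c`. -/
theorem stmt_3 (a b w : ℝ) (hab : a ≤ b) (hw : 0 < w) (c : ℤ)
    (h₁ : a ≤ c * w) (h₂ : (c + 1) * w ≤ b) :
    ∃ k : ℕ, a + k * w ≤ b ∧ ⌊(a + k * w) / w⌋ = c := by
  have haw : a / w ≤ (c : ℝ) := by
    rw [div_le_iff₀ hw]; linarith
  have hcnn : (0 : ℝ) ≤ (c : ℝ) - a / w := by linarith
  set m : ℤ := ⌈(c : ℝ) - a / w⌉ with hm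
  have hm0 : 0 ≤ m := Int.ceil_nonneg hcnn
  have hmle : ((c : ℝ) - a / w) ≤ m := Int.le_ceil _
  have hmlt : (m : ℝ) < (c : ℝ) - a / w + 1 := Int.ceil_lt_add_one _
  have ha : a / w * w = a := div_mul_cancel₀ a hw.ne'
  have e1 : (c : ℝ) * w ≤ a + m * w := by
    nlinarith [mul_le_mul_of_nonneg_right hmle hw.le]
  have e2 : a + m * w < ((c : ℝ) + 1) * w := by
    nlinarith [mul_lt_mul_of_pos_right hmlt hw]
  have hcast : ((m.toNat : ℕ) : ℝ) = (m : ℝ) := by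
    exact_mod_cast congrArg (fun z : ℤ => (z : ℝ)) (Int.toNat_of_nonneg hm0)
  refine ⟨m.toNat, ?_, ?_⟩
  · rw [hcast]; linarith
  · rw [hcast, Int.floor_eq_iff]
    constructor
    · rw [le_div_iff₀ hw]; linarith
    · rw [div_lt_iff₀ hw]; push_cast; linarith
end

section
/- Work in the Euclidean plane EuclideanSpace ℝ (Fin 2) with the Euclidean distance dist, and fix a cell width w > 0. Let S be a finite set of objects, each object o being a pair (o.p, o.ψ) of a point o.p in the plane and a finite keyword set o.ψ ⊆ ℕ. Let q be a query point, ψq a finite keyword set, and r ≥ 0. Let I be a set of integer pairs containing every pair (cx, cy) with ⌊(q 0 − r)/w⌋ ≤ cx ≤ ⌊(q 0 + r)/w⌋ and ⌊(q 1 − r)/w⌋ ≤ cy ≤ ⌊(q 1 + r)/w⌋, and let C := {o ∈ S : (⌊o.p 0 / w⌋, ⌊o.p 1 / w⌋) ∈ I} be the objects in the touched cells. Then {o ∈ C : dist o.p q ≤ r and ψq ⊆ o.ψ} = {o ∈ S : dist o.p q ≤ r and ψq ⊆ o.ψ}. -/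
lemma coord_dist_le (p q : EuclideanSpace ℝ (Fin 2)) (i : Fin 2) :
    |p i - q i| ≤ dist p q := by
  have h := EuclideanSpace.dist_eq p q
  rw [h]
  have h1 : dist (p i) (q i) ^ 2 ≤ ∑ j, dist (p j) (q j) ^ 2 :=
    Finset.single_le_sum (f := fun j => dist (p j) (q j) ^ 2)
      (fun j _ => sq_nonneg _) (Finset.mem_univ i)
  calc |p i - q i| = Real.sqrt (dist (p i) (q i) ^ 2) := by
        rw [Real.sqrt_sq_eq_abs, Real.dist_eq, abs_abs]
    _ ≤ _ := Real.sqrt_le_sqrt h1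

/-- In the Euclidean plane with grid width `w > 0`, let `S` be a finite
set of objects `o = (o.p, o.ψ)` (a point with a finite keyword set). For a query
`(q, ψq, r)` with `r ≥ 0`, let `I` be a set of integer cell-index pairs containing
all pairs `(cx, cy)` with `⌊(q 0 − r)/w⌋ ≤ cx ≤ ⌊(q 0 + r)/w⌋` and
`⌊(q 1 − r)/w⌋ ≤ cy ≤ ⌊(q 1 + r)/w⌋`, and let `C` be the objects of `S` whose cell
index lies in `I`. Then refining `C` by distance and keywords yields exactly the
exact query answer over `S`. -/
theorem stmt_9 (w : ℝ) (hw : 0 < w)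
    (S : Finset (EuclideanSpace ℝ (Fin 2) × Finset ℕ))
    (q : EuclideanSpace ℝ (Fin 2)) (ψq : Finset ℕ) (r : ℝ) (hr : 0 ≤ r)
    (I : Set (ℤ × ℤ))
    (hI : ∀ cx cy : ℤ,
      ⌊(q 0 - r) / w⌋ ≤ cx → cx ≤ ⌊(q 0 + r) / w⌋ →
      ⌊(q 1 - r) / w⌋ ≤ cy → cy ≤ ⌊(q 1 + r) / w⌋ → (cx, cy) ∈ I) :
    {o ∈ (S : Set (EuclideanSpace ℝ (Fin 2) × Finset ℕ)) |
        (⌊o.1 0 / w⌋, ⌊o.1 1 / w⌋) ∈ I ∧ dist o.1 q ≤ r ∧ ψq ⊆ o.2} =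
    {o ∈ (S : Set (EuclideanSpace ℝ (Fin 2) × Finset ℕ)) |
        dist o.1 q ≤ r ∧ ψq ⊆ o.2} := by
  ext o
  simp only [Set.mem_setOf_eq]
  constructor
  · rintro ⟨hS, _, hd, hk⟩; exact ⟨hS, hd, hk⟩
  · rintro ⟨hS, hd, hk⟩
    refine ⟨hS, ?_, hd, hk⟩
    have key : ∀ i : Fin 2, ⌊(q i - r) / w⌋ ≤ ⌊o.1 i / w⌋ ∧ ⌊o.1 i / w⌋ ≤ ⌊(q i + r) / w⌋ := by
      intro i
      have h := coord_dist_le o.1 q i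
      have h' : |o.1 i - q i| ≤ r := h.trans hd
      rw [abs_le] at h'
      constructor
      · exact Int.floor_le_floor (div_le_div_of_nonneg_right (by linarith [h'.2]) hw.le)
      · exact Int.floor_le_floor (div_le_div_of_nonneg_right (by linarith [h'.1]) hw.le)
    exact hI _ _ (key 0).1 (key 0).2 (key 1).1 (key 1).2
end
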